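/- Let ζ(x) = 2x − sin(2x), ψ(x) = sin(x)/(1 + ζ(x)²), and V(x) = −32·sin(x)·(ζ(x)³·cos(x) − 3·ζ(x)²·sin(x)³ + ζ(x)·cos(x) + sin(x)³)/(1 + ζ(x)²)². Then for every m ≥ 0 and every real E with E² = 1 + m², the function ψ is a nonzero square-integrable solution of the reduced Klein–Gordon eigenvalue equation −ψ''(x) + (m² + V(x))·ψ(x) = E²·ψ(x) for all x ∈ ℝ, and |E| = √(1+m²) > m when m ≥ 0, so the eigenvalues E = ±√(1+m²) lie in the continuum region (−∞, −m] ∪ [m, ∞). -/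

import Mathlib

open Real MeasureTheory

/-- ζ(x) = 2x − sin(2x) -/
noncomputable def zeta (x : ℝ) : ℝ := 2 * x - Real.sin (2 * x)

/-- ψ(x) = sin(x)/(1 + ζ(x)²) -/
noncomputable def psi (x : ℝ) : ℝ := Real.sin x / (1 + zeta x ^ 2)

/-- One-dimensional von Neumann–Wigner potential. -/
noncomputable def V (x : ℝ) : ℝ :=
  -32 * Real.sin x *
    (zeta x ^ 3 * Real.cos x - 3 * zeta x ^ 2 * Real.sin x ^ 3
      + zeta x * Real.cos x + Real.sin x ^ 3) / (1 + zeta x ^ 2) ^ 2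

/-!
ψ is an explicit function, so the eigenvalue equation −ψ'' + Vψ = ψ is a direct computation,
using ζ' = 2 − 2cos 2x = 4 sin²x. Since |ζ(x) − 2x| ≤ 1, the weight 1/(1 + ζ²) decays like
1/(1 + x²), which dominates ψ² and makes it integrable. Adding the mass term shifts the
eigenvalue 1 to E² = 1 + m² > m², so |E| > m.
-/

lemma hasDerivAt_zeta (x : ℝ) : HasDerivAt zeta (4 * sin x ^ 2) x := by
  have h := ((hasDerivAt_id x).const_mul 2).sub
    ((hasDerivAt_sin (2 * x)).comp x ((hasDerivAt_id x).const_mul 2))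
  refine h.congr_deriv ?_
  simp only [mul_one, cos_two_mul, cos_sq']
  ring

lemma continuous_zeta : Continuous zeta := by
  unfold zeta
  fun_prop

lemma one_add_zeta_sq_pos (x : ℝ) : 0 < 1 + zeta x ^ 2 := by positivity

lemma hasDerivAt_one_add_zeta_sq (x : ℝ) :
    HasDerivAt (fun x => 1 + zeta x ^ 2) (8 * zeta x * sin x ^ 2) x :=
  (((hasDerivAt_zeta x).pow 2).const_add 1).congr_deriv (by ring)

noncomputable def psiDeriv (x : ℝ) : ℝ :=
  (cos x * (1 + zeta x ^ 2) - 8 * zeta x * sin x ^ 3) / (1 + zeta x ^ 2) ^ 2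

lemma hasDerivAt_psi (x : ℝ) : HasDerivAt psi (psiDeriv x) x := by
  refine ((hasDerivAt_sin x).div (hasDerivAt_one_add_zeta_sq x)
    (one_add_zeta_sq_pos x).ne').congr_deriv ?_
  unfold psiDeriv
  ring

lemma deriv_psi : deriv psi = psiDeriv := funext fun x => (hasDerivAt_psi x).deriv

lemma hasDerivAt_psiDeriv (x : ℝ) : HasDerivAt psiDeriv ((V x - 1) * psi x) x := by
  have hnum := ((hasDerivAt_cos x).mul (hasDerivAt_one_add_zeta_sq x)).sub
    (((hasDerivAt_zeta x).const_mul 8).mul ((hasDerivAt_sin x).pow 3))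
  have hden := (hasDerivAt_one_add_zeta_sq x).pow 2
  refine (hnum.div hden (pow_pos (one_add_zeta_sq_pos x) 2).ne').congr_deriv ?_
  have := (one_add_zeta_sq_pos x).ne'
  simp only [Pi.sub_apply, Pi.mul_apply, Pi.pow_apply, V, psi]
  field_simp
  ring

lemma neg_deriv_deriv_psi_add_V_mul_psi (x : ℝ) :
    -deriv (deriv psi) x + V x * psi x = psi x := by
  rw [deriv_psi, (hasDerivAt_psiDeriv x).deriv]
  ring

lemma psi_ne_zero : psi ≠ 0 := by
  intro h
  have h := congrFun h (π / 2)
  simp only [psi, sin_pi_div_two, Pi.zero_apply, div_eq_zero_iff] at h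
  rcases h with h | h
  · exact one_ne_zero h
  · exact (one_add_zeta_sq_pos _).ne' h

lemma one_add_sq_le_four_mul_one_add_zeta_sq (x : ℝ) : 1 + x ^ 2 ≤ 4 * (1 + zeta x ^ 2) := by
  unfold zeta
  -- with s = sin 2x the difference is (15x − 8s)²/15 + 3 − 4s²/15
  nlinarith [sin_sq_le_one (2 * x), sq_nonneg (15 * x - 8 * sin (2 * x))]

lemma psi_sq_le (x : ℝ) : psi x ^ 2 ≤ 4 * (1 + x ^ 2)⁻¹ := by
  have hz := one_add_zeta_sq_pos x
  have hx : 0 < 1 + x ^ 2 := by positivity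
  calc psi x ^ 2 = sin x ^ 2 / (1 + zeta x ^ 2) ^ 2 := div_pow _ _ _
    _ ≤ 1 / (1 + zeta x ^ 2) := by
        rw [div_le_div_iff₀ (by positivity) hz]
        nlinarith [sin_sq_le_one x, sq_nonneg (zeta x)]
    _ ≤ 4 * (1 + x ^ 2)⁻¹ := by
        rw [div_le_iff₀ hz, ← div_eq_mul_inv, div_mul_eq_mul_div, le_div_iff₀ hx]
        linarith [one_add_sq_le_four_mul_one_add_zeta_sq x]

lemma continuous_psi : Continuous psi :=
  continuous_sin.div (continuous_const.add (continuous_zeta.pow 2))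
    fun x => (one_add_zeta_sq_pos x).ne'

lemma integrable_psi_sq : Integrable (fun x => psi x ^ 2) := by
  refine (integrable_inv_one_add_sq.const_mul 4).mono' (continuous_psi.pow 2).aestronglyMeasurable
    (Filter.Eventually.of_forall fun x => ?_)
  rw [norm_of_nonneg (sq_nonneg _)]
  exact psi_sq_le x

lemma abs_eq_sqrt_and_lt_abs_of_sq_eq {m E c : ℝ} (hm : 0 ≤ m) (hc : 0 < c)
    (hE : E ^ 2 = c + m ^ 2) :
    |E| = √(c + m ^ 2) ∧ m < |E| ∧ (E ≤ -m ∨ m ≤ E) := by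
  have hlt : m < |E| := by
    rw [← abs_of_nonneg hm, ← sq_lt_sq]
    linarith
  exact ⟨by rw [← hE, sqrt_sq_eq_abs], hlt, le_abs'.mp hlt.le⟩

/-- For every mass m ≥ 0 and every E with E² = 1 + m², the function ψ is a
nonzero square-integrable solution of the reduced Klein–Gordon eigenvalue
equation −ψ'' + (m² + V)ψ = E²ψ, and the eigenvalue E = ±√(1+m²) lies in the
continuum region (−∞, −m] ∪ [m, ∞) (indeed |E| > m). -/
theorem KG_eigenvalue_embedded_in_continuum :
    ∀ m : ℝ, 0 ≤ m → ∀ E : ℝ, E ^ 2 = 1 + m ^ 2 →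
      psi ≠ 0 ∧
      MeasureTheory.Integrable (fun x : ℝ => psi x ^ 2) MeasureTheory.volume ∧
      (∀ x : ℝ, -(deriv (deriv psi)) x + (m ^ 2 + V x) * psi x = E ^ 2 * psi x) ∧
      |E| = Real.sqrt (1 + m ^ 2) ∧ m < |E| ∧ (E ≤ -m ∨ m ≤ E) := by
  intro m hm E hE
  refine ⟨psi_ne_zero, integrable_psi_sq, fun x => ?_,
    abs_eq_sqrt_and_lt_abs_of_sq_eq hm one_pos hE⟩
  linear_combination neg_deriv_deriv_psi_add_V_mul_psi x - psi x * hE
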